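/- If there exists a matching M of Q_n such that every k-dimensional subcube of Q_n contains an edge of M, then there exists a matching M' of Q_{4n} such that every b-dimensional subcube of Q_{4n} contains an edge of M', where b = max(4k - 3, n + k). -/

import Mathlib

def QAdj {n : ℕ} (x y : Fin n → Bool) : Prop :=
  (Finset.univ.filter (fun i => x i ≠ y i)).card = 1

def QEdge (n : ℕ) (e : Set (Fin n → Bool)) : Prop :=
  ∃ x y, QAdj x y ∧ e = {x, y}

def IsSubcube (n k : ℕ) (S : Set (Fin n → Bool)) : Prop :=
  ∃ (F : Finset (Fin n)) (b : Fin n → Bool),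
    F.card = n - k ∧ S = {x | ∀ i ∈ F, x i = b i}

def IsMatching (n : ℕ) (M : Set (Set (Fin n → Bool))) : Prop :=
  (∀ e ∈ M, QEdge n e) ∧ ∀ e ∈ M, ∀ f ∈ M, e ≠ f → e ∩ f = ∅

def Blocks (n k : ℕ) (M : Set (Set (Fin n → Bool))) : Prop :=
  ∀ S, IsSubcube n k S → ∃ e ∈ M, e ⊆ S

def parity {n : ℕ} (x : Fin n → Bool) : ℕ :=
  (Finset.univ.filter (fun i => x i = true)).card % 2

/-! Split the `4n` coordinates into four blocks of `n`, and let `fsel` encode a perfect matching of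
`Q_4` by the direction of the edge at each vertex. A vertex `x` of `Q_{4n}` selects the block
`fsel (parities of its blocks)` and is matched along the edge of `M` at that block, the other
blocks being kept. Moving along that edge flips only the parity of the selected block, and `fsel`
is constant on its own edges, so the partner selects the same block.

A `b`-dimensional subcube fixes `4n - b` coordinates. As `b ≥ 4k - 3`, some block has at most
`n - k` fixed coordinates, so `M` has an edge in the subcube there; as `b ≥ n + k`, at most two
blocks are completely fixed, and the parity of every other block can be chosen freely. Since every
3-face of `Q_4` contains vertices matched in each direction and every 2-face contains an edge of
`fsel`, these choices make a block of the first kind the selected one. -/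

open Finset

section Hypercube

variable {n : ℕ}

lemma QAdj.symm {u v : Fin n → Bool} (h : QAdj u v) : QAdj v u := by
  simpa only [QAdj, ne_comm] using h

lemma QAdj.ne {u v : Fin n → Bool} (h : QAdj u v) : u ≠ v := by
  rintro rfl
  simp [QAdj] at h

lemma QAdj_update_not (w : Fin n → Bool) (r : Fin n) : QAdj w (Function.update w r (!w r)) := by
  have : univ.filter (fun i => w i ≠ Function.update w r (!w r) i) = {r} := by
    ext i
    by_cases hi : i = r
    · subst hi; simp
    · simp [hi]
  rw [QAdj, this, card_singleton]

lemma parity_eq_one_iff_of_QAdj {u v : Fin n → Bool} (h : QAdj u v) :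
    parity v = 1 ↔ ¬parity u = 1 := by
  set A := univ.filter (fun i => u i = true)
  set B := univ.filter (fun i => v i = true)
  have hdiff : univ.filter (fun i => u i ≠ v i) = A \ B ∪ B \ A := by
    ext i
    cases hu : u i <;> cases hv : v i <;> simp [A, B, hu, hv]
  have hsymm : #(A \ B) + #(B \ A) = 1 := by
    rw [← card_union_of_disjoint disjoint_sdiff_sdiff, ← hdiff]
    exact h
  have hA := card_sdiff_add_card_inter A B
  have hB := card_sdiff_add_card_inter B A
  rw [inter_comm] at hB
  change #B % 2 = 1 ↔ ¬#A % 2 = 1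
  omega

lemma exists_agree_on_parity_eq {H : Finset (Fin n)} (hH : #H < n) (w : Fin n → Bool) (b : Bool) :
    ∃ w' : Fin n → Bool, (∀ r ∈ H, w' r = w r) ∧ decide (parity w' = 1) = b := by
  obtain ⟨r, -, hr⟩ :=
    exists_mem_notMem_of_card_lt_card (s := H) (t := univ) (by simpa using hH)
  have hflip := parity_eq_one_iff_of_QAdj (QAdj_update_not w r)
  by_cases hw : decide (parity w = 1) = b
  · exact ⟨w, fun _ _ => rfl, hw⟩
  · refine ⟨Function.update w r (!w r), fun s hs => ?_, ?_⟩
    · rw [Function.update_of_ne (ne_of_mem_of_not_mem hs hr)]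
    · cases b <;> simp_all

lemma IsMatching.qAdj_of_pair_mem {M : Set (Set (Fin n → Bool))} (hM : IsMatching n M)
    {u v : Fin n → Bool} (h : {u, v} ∈ M) : QAdj u v := by
  obtain ⟨x, y, hxy, he⟩ := hM.1 _ h
  rcases Set.pair_eq_pair_iff.1 he with ⟨rfl, rfl⟩ | ⟨rfl, rfl⟩
  exacts [hxy, hxy.symm]

lemma IsMatching.eq_of_mem_of_mem {M : Set (Set (Fin n → Bool))} (hM : IsMatching n M)
    {e f : Set (Fin n → Bool)} (he : e ∈ M) (hf : f ∈ M) {x : Fin n → Bool} (hxe : x ∈ e)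
    (hxf : x ∈ f) : e = f := by
  by_contra hne
  have := hM.2 e he f hf hne
  exact (Set.eq_empty_iff_forall_notMem.1 this) x ⟨hxe, hxf⟩

lemma Blocks.one_le {k : ℕ} {M : Set (Set (Fin n → Bool))} (hM : IsMatching n M)
    (hB : Blocks n k M) : 1 ≤ k := by
  by_contra! hk
  obtain rfl : k = 0 := by omega
  obtain ⟨e, he, hsub⟩ :=
    hB {x | ∀ i ∈ univ, x i = false} ⟨univ, fun _ => false, by simp, rfl⟩
  obtain ⟨x, y, hxy, rfl⟩ := hM.1 e he
  apply hxy.ne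
  funext i
  rw [hsub (Set.mem_insert x _) i (mem_univ i), hsub (Set.mem_insert_of_mem x rfl) i (mem_univ i)]

lemma Blocks.exists_subset_of_card_le {k : ℕ} {M : Set (Set (Fin n → Bool))}
    (hB : Blocks n k M) {H : Finset (Fin n)} (hH : #H ≤ n - k) (b : Fin n → Bool) :
    ∃ e ∈ M, e ⊆ {w | ∀ r ∈ H, w r = b r} := by
  obtain ⟨H', hHH', -, hH'⟩ := exists_subsuperset_card_eq (subset_univ H) hH (by simp)
  obtain ⟨e, he, hsub⟩ := hB _ ⟨H', b, hH', rfl⟩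
  exact ⟨e, he, fun w hw r hr => hsub hw r (hHH' hr)⟩

end Hypercube

section BlockDecomposition

variable {m n : ℕ}

def block (x : Fin (m * n) → Bool) (q : Fin m) : Fin n → Bool :=
  fun r => x (finProdFinEquiv (q, r))

def ofBlocks (w : Fin m → Fin n → Bool) : Fin (m * n) → Bool :=
  fun i => w (finProdFinEquiv.symm i).1 (finProdFinEquiv.symm i).2

@[simp]
lemma block_ofBlocks (w : Fin m → Fin n → Bool) : block (ofBlocks w) = w := by
  funext q r
  simp [block, ofBlocks]

lemma ext_block {x y : Fin (m * n) → Bool} (h : ∀ q, block x q = block y q) : x = y := by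
  funext i
  obtain ⟨⟨q, r⟩, rfl⟩ := finProdFinEquiv.surjective i
  exact congrFun (h q) r

lemma card_filter_eq_sum_blocks (P : Fin (m * n) → Prop) [DecidablePred P] :
    #(univ.filter P) = ∑ q, #(univ.filter fun r => P (finProdFinEquiv (q, r))) := by
  simp only [card_filter]
  rw [← Equiv.sum_comp finProdFinEquiv, Fintype.sum_prod_type]

def blockFixed (F : Finset (Fin (m * n))) (q : Fin m) : Finset (Fin n) :=
  univ.filter fun r => finProdFinEquiv (q, r) ∈ F

lemma sum_card_blockFixed (F : Finset (Fin (m * n))) : ∑ q, #(blockFixed F q) = #F := by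
  unfold blockFixed
  rw [← card_filter_eq_sum_blocks (· ∈ F), filter_mem_eq_inter, univ_inter]

lemma card_blockFixed_le (F : Finset (Fin (m * n))) (q : Fin m) : #(blockFixed F q) ≤ n :=
  (card_le_univ _).trans_eq (Fintype.card_fin n)

lemma ofBlocks_mem_subcube {F : Finset (Fin (m * n))} {b : Fin (m * n) → Bool}
    {w : Fin m → Fin n → Bool} (hw : ∀ q, ∀ r ∈ blockFixed F q, w q r = block b q r) :
    ∀ i ∈ F, ofBlocks w i = b i := by
  intro i hi
  obtain ⟨⟨q, r⟩, rfl⟩ := finProdFinEquiv.surjective i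
  simpa [ofBlocks, blockFixed, block, hi] using hw q r

lemma QAdj_of_block {x y : Fin (m * n) → Bool} {j : Fin m}
    (hne : ∀ q ≠ j, block x q = block y q) (hj : QAdj (block x j) (block y j)) : QAdj x y := by
  rw [QAdj, card_filter_eq_sum_blocks, sum_eq_single j]
  · exact hj
  · intro q _ hq
    simpa [block] using congrFun (hne q hq)
  · simp

def parityVector (x : Fin (m * n) → Bool) : Fin m → Bool :=
  fun q => decide (parity (block x q) = 1)

end BlockDecomposition

section Lift

variable {m n : ℕ}

/-- `f p` is the direction of the edge at `p` of a perfect matching of `Q_m`. -/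
def IsDirectionSelector (f : (Fin m → Bool) → Fin m) : Prop :=
  ∀ p c, f (Function.update p (f p) c) = f p

lemma IsDirectionSelector.apply_update {f : (Fin m → Bool) → Fin m} (hf : IsDirectionSelector f)
    {p : Fin m → Bool} {j : Fin m} (hj : f p = j) (c : Bool) : f (Function.update p j c) = j :=
  hj ▸ hf p c

def liftPair (f : (Fin m → Bool) → Fin m) (M : Set (Set (Fin n → Bool)))
    (x y : Fin (m * n) → Bool) : Prop :=
  (∀ q ≠ f (parityVector x), block y q = block x q) ∧
    {block x (f (parityVector x)), block y (f (parityVector x))} ∈ M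

def liftMatching (f : (Fin m → Bool) → Fin m) (M : Set (Set (Fin n → Bool))) :
    Set (Set (Fin (m * n) → Bool)) :=
  {e | ∃ x y, liftPair f M x y ∧ e = {x, y}}

variable {f : (Fin m → Bool) → Fin m} {M : Set (Set (Fin n → Bool))}
  {x y : Fin (m * n) → Bool}

lemma parityVector_eq_update {j : Fin m} (h : ∀ q ≠ j, block y q = block x q) :
    parityVector y = Function.update (parityVector x) j (parityVector y j) := by
  funext q
  by_cases hq : q = j
  · subst hq
    simp
  · simp [Function.update_of_ne hq, parityVector, h q hq]

namespace liftPair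

lemma selector_eq (hf : IsDirectionSelector f) (h : liftPair f M x y) :
    f (parityVector y) = f (parityVector x) := by
  rw [parityVector_eq_update h.1]
  exact hf.apply_update rfl _

lemma symm (hf : IsDirectionSelector f) (h : liftPair f M x y) : liftPair f M y x := by
  refine ⟨?_, ?_⟩ <;> rw [h.selector_eq hf]
  · exact fun q hq => (h.1 q hq).symm
  · exact Set.pair_comm _ _ ▸ h.2

lemma qAdj (hM : IsMatching n M) (h : liftPair f M x y) : QAdj x y :=
  QAdj_of_block (fun q hq => (h.1 q hq).symm) (hM.qAdj_of_pair_mem h.2)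

lemma right_unique (hM : IsMatching n M) {y' : Fin (m * n) → Bool} (h : liftPair f M x y)
    (h' : liftPair f M x y') : y = y' := by
  set j := f (parityVector x)
  have hj : block y j = block y' j := by
    rcases Set.pair_eq_pair_iff.1
        (hM.eq_of_mem_of_mem h.2 h'.2 (Set.mem_insert _ _) (Set.mem_insert _ _)) with
      ⟨-, hyy'⟩ | ⟨hxy', hyx⟩
    exacts [hyy', hyx.trans hxy']
  refine ext_block fun q => ?_
  by_cases hq : q = j
  · rw [hq, hj]
  · rw [h.1 q hq, h'.1 q hq]

lemma exists_of_mem (hf : IsDirectionSelector f) (h : liftPair f M x y)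
    {z : Fin (m * n) → Bool} (hz : z ∈ ({x, y} : Set _)) :
    ∃ w, liftPair f M z w ∧ ({x, y} : Set _) = {z, w} := by
  rcases hz with rfl | rfl
  exacts [⟨y, h, rfl⟩, ⟨x, h.symm hf, Set.pair_comm _ _⟩]

end liftPair

lemma liftMatching_isMatching (hf : IsDirectionSelector f) (hM : IsMatching n M) :
    IsMatching (m * n) (liftMatching f M) := by
  constructor
  · rintro e ⟨x, y, h, rfl⟩
    exact ⟨x, y, h.qAdj hM, rfl⟩
  · rintro e ⟨x, y, h, rfl⟩ e' ⟨x', y', h', rfl⟩ hne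
    refine Set.eq_empty_of_forall_notMem fun z ⟨hz, hz'⟩ => hne ?_
    obtain ⟨w, hw, hxy⟩ := h.exists_of_mem hf hz
    obtain ⟨w', hw', hxy'⟩ := h'.exists_of_mem hf hz'
    rw [hxy, hxy', hw.right_unique hM hw']

lemma exists_blocks_agree_on_parity_eq {F : Finset (Fin (m * n))} {b : Fin (m * n) → Bool}
    {j : Fin m} {p : Fin m → Bool}
    (hp : ∀ q ≠ j, #(blockFixed F q) < n ∨ p q = parityVector b q) :
    ∃ W : Fin m → Fin n → Bool, (∀ q, ∀ r ∈ blockFixed F q, W q r = block b q r) ∧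
      ∀ q ≠ j, decide (parity (W q) = 1) = p q := by
  have hW : ∀ q, ∃ w : Fin n → Bool, (∀ r ∈ blockFixed F q, w r = block b q r) ∧
      (q ≠ j → decide (parity w = 1) = p q) := by
    intro q
    by_cases hq : q = j
    · exact ⟨block b q, fun _ _ => rfl, fun h => absurd hq h⟩
    rcases hp q hq with hlt | hpq
    · obtain ⟨w, hw, hpar⟩ := exists_agree_on_parity_eq hlt (block b q) (p q)
      exact ⟨w, hw, fun _ => hpar⟩
    · exact ⟨block b q, fun _ _ => rfl, fun _ => hpq.symm⟩
  choose W hWb hWp using hW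
  exact ⟨W, hWb, hWp⟩

lemma exists_liftMatching_subset_subcube {k : ℕ} (hf : IsDirectionSelector f)
    (hM : IsMatching n M) (hB : Blocks n k M) {F : Finset (Fin (m * n))}
    {b : Fin (m * n) → Bool} {j : Fin m} (hj : #(blockFixed F j) ≤ n - k) {p : Fin m → Bool}
    (hpj : f p = j) (hp : ∀ q ≠ j, #(blockFixed F q) < n ∨ p q = parityVector b q) :
    ∃ e ∈ liftMatching f M, e ⊆ {x | ∀ i ∈ F, x i = b i} := by
  obtain ⟨W, hWb, hWp⟩ := exists_blocks_agree_on_parity_eq hp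
  obtain ⟨e, he, hsub⟩ := hB.exists_subset_of_card_le hj (block b j)
  obtain ⟨u, v, -, rfl⟩ := hM.1 e he
  have hfixed : ∀ w ∈ ({u, v} : Set _), ∀ q, ∀ r ∈ blockFixed F q,
      Function.update W j w q r = block b q r := by
    intro w hw q r hr
    by_cases hq : q = j
    · subst hq
      simpa using hsub hw r hr
    · simpa [hq] using hWb q r hr
  have hsel : f (parityVector (ofBlocks (Function.update W j u))) = j := by
    convert hf.apply_update hpj (decide (parity u = 1)) using 2
    funext q
    by_cases hq : q = j
    · subst hq
      simp [parityVector]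
    · simp [parityVector, hq, hWp q hq]
  have hpair :
      liftPair f M (ofBlocks (Function.update W j u)) (ofBlocks (Function.update W j v)) := by
    unfold liftPair
    rw [hsel]
    exact ⟨fun q hq => by simp [hq], by simpa using he⟩
  refine ⟨_, ⟨_, _, hpair, rfl⟩, ?_⟩
  rintro x (rfl | rfl)
  exacts [ofBlocks_mem_subcube (hfixed u (by simp)), ofBlocks_mem_subcube (hfixed v (by simp))]

end Lift

section Q4

def fsel (p : Fin 4 → Bool) : Fin 4 :=
  match p 0, p 1, p 2, p 3 with
  | false, false, false, false => 0
  | false, false, false, true  => 1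
  | false, false, true,  false => 3
  | false, false, true,  true  => 3
  | false, true,  false, false => 2
  | false, true,  false, true  => 1
  | false, true,  true,  false => 2
  | false, true,  true,  true  => 0
  | true,  false, false, false => 0
  | true,  false, false, true  => 2
  | true,  false, true,  false => 1
  | true,  false, true,  true  => 2
  | true,  true,  false, false => 3
  | true,  true,  false, true  => 3
  | true,  true,  true,  false => 1
  | true,  true,  true,  true  => 0

lemma isDirectionSelector_fsel : IsDirectionSelector fsel := by
  unfold IsDirectionSelector
  decide

lemma exists_fsel_eq : ∀ (j c : Fin 4) (b : Bool), ∃ p, fsel p = j ∧ p c = b := by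
  decide

lemma exists_fsel_ne_ne : ∀ (c₁ c₂ : Fin 4) (b : Fin 4 → Bool), c₁ ≠ c₂ →
    ∃ p, fsel p ≠ c₁ ∧ fsel p ≠ c₂ ∧ p c₁ = b c₁ ∧ p c₂ = b c₂ := by
  decide

lemma exists_selectable_block {n k : ℕ} (hk : 1 ≤ k) {g : Fin 4 → ℕ} (hg : ∀ q, g q ≤ n)
    (hsum : ∑ q, g q = 4 * n - max (4 * k - 3) (n + k)) (b : Fin 4 → Bool) :
    ∃ j p, g j ≤ n - k ∧ fsel p = j ∧ ∀ q ≠ j, g q < n ∨ p q = b q := by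
  rcases Nat.eq_zero_or_pos n with rfl | hn
  · exact ⟨fsel b, b, by simpa using hg (fsel b), rfl, fun _ _ => Or.inr rfl⟩
  have h3 : ∀ x y z, x ≠ y → x ≠ z → y ≠ z → g x + g y + g z ≤ 3 * n - k := by
    intro x y z hxy hxz hyz
    have := sum_le_univ_sum_of_nonneg (s := {x, y, z}) (f := g) fun _ => Nat.zero_le _
    simp only [sum_insert, mem_insert, mem_singleton, hxy, hxz, hyz, not_false_eq_true,
      or_self, sum_singleton] at this
    omega
  by_cases hfull : ∃ c₁ c₂, c₁ ≠ c₂ ∧ n ≤ g c₁ ∧ n ≤ g c₂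
  · obtain ⟨c₁, c₂, hc, hc₁, hc₂⟩ := hfull
    obtain ⟨p, hp₁, hp₂, hpb₁, hpb₂⟩ := exists_fsel_ne_ne c₁ c₂ b hc
    have := h3 (fsel p) c₁ c₂ hp₁ hp₂ hc
    refine ⟨fsel p, p, by omega, rfl, fun q hq => ?_⟩
    by_cases hq₁ : q = c₁
    · exact Or.inr (hq₁ ▸ hpb₁)
    by_cases hq₂ : q = c₂
    · exact Or.inr (hq₂ ▸ hpb₂)
    have := h3 q c₁ c₂ hq₁ hq₂ hc
    omega
  push Not at hfull
  obtain ⟨j, hj⟩ : ∃ j, g j ≤ n - k := by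
    by_contra! h
    have := h 0; have := h 1; have := h 2; have := h 3
    rw [Fin.sum_univ_four] at hsum
    omega
  obtain ⟨c, hc⟩ : ∃ c, ∀ q ≠ c, g q < n := by
    by_cases hc : ∃ c, n ≤ g c
    · obtain ⟨c, hc⟩ := hc
      exact ⟨c, fun q hq => hfull c q (Ne.symm hq) hc⟩
    · push Not at hc
      exact ⟨j, fun q _ => hc q⟩
  obtain ⟨p, hpj, hpc⟩ := exists_fsel_eq j c (b c)
  refine ⟨j, p, hj, hpj, fun q _ => ?_⟩
  by_cases hqc : q = c
  · exact Or.inr (hqc ▸ hpc)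
  · exact Or.inl (hc q hqc)

end Q4

theorem stmt_8 (n k : ℕ)
    (h : ∃ M, IsMatching n M ∧ Blocks n k M) :
    ∃ M', IsMatching (4 * n) M' ∧ Blocks (4 * n) (max (4 * k - 3) (n + k)) M' := by
  obtain ⟨M, hM, hB⟩ := h
  refine ⟨liftMatching fsel M, liftMatching_isMatching isDirectionSelector_fsel hM, ?_⟩
  rintro S ⟨F, b, hF, rfl⟩
  obtain ⟨j, p, hj, hpj, hp⟩ := exists_selectable_block (hB.one_le hM) (card_blockFixed_le F)
    ((sum_card_blockFixed F).trans hF) (parityVector b)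
  exact exists_liftMatching_subset_subcube isDirectionSelector_fsel hM hB hj hpj hp
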